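/- arXiv:2404.01511 — 6 statements merged into one kernel-verified Lean document; each statement's English description precedes it below -/
import Mathlib

section
/- Let X be a locally compact metrizable space, let X ⊇ X₁ ⊇ X₂ ⊇ ⋯ be a decreasing sequence of closed subsets with intersection X_∞ = ⋂_m X_m, and let (α_m) be a sequence of Radon measures on X with supp(α_m) ⊆ X_m, converging weak-* to a Radon measure α_∞. Let F̂ : X → ℝ be a bounded function with precompact support such that: (i) whenever x_m → x with x_m ∈ X_m for all m, we have F̂(x_m) → F̂(x); and (ii) F̂ restricted to supp(α_m) is measurable for each m. Then ∫ F̂ dα_m converges to ∫ F̂ dα_∞. -/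
/-!
`F` is continuous on `X∞ = ⋂ m, Xs m`, so by Tietze it agrees on `X∞` with a continuous compactly
supported `G`. The limit measure lives on `X∞`, hence `∫ F ∂αlim = ∫ G ∂αlim = lim ∫ G ∂(α m)`.
By compactness, `|F - G| ≤ ε` on `Xs m ∩ (tsupport F ∪ tsupport G)` for large `m`, while the
integrals against `α m` of a bump function `ψ` equal to `1` on that compact set converge, so
`∫ F ∂(α m) - ∫ G ∂(α m) → 0`.
-/

open Filter Topology MeasureTheory

/-- The (topological) support of a Borel measure: points all of whose open neighborhoods
have positive measure. -/
def measureSupport {X : Type*} [TopologicalSpace X] [MeasurableSpace X]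
    (μ : Measure X) : Set X :=
  {x : X | ∀ U : Set X, IsOpen U → x ∈ U → 0 < μ U}

open Set

section Topology

variable {X : Type*} [TopologicalSpace X]

theorem mem_iInter_of_tendsto_of_antitone {s : ℕ → Set X} (hs : ∀ n, IsClosed (s n))
    (hanti : Antitone s) {u : ℕ → X} {x : X} (hu : ∀ n, u n ∈ s n)
    (hux : Tendsto u atTop (𝓝 x)) : x ∈ ⋂ n, s n :=
  mem_iInter.2 fun n => (hs n).mem_of_tendsto hux <|
    (eventually_ge_atTop n).mono fun k hk => hanti hk (hu k)

theorem continuous_restrict_iInter_of_tendsto_comp [FirstCountableTopology X]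
    {Y : Type*} [TopologicalSpace Y] {s : ℕ → Set X} {f : X → Y}
    (hf : ∀ (x : X) (u : ℕ → X), (∀ n, u n ∈ s n) → Tendsto u atTop (𝓝 x) →
      Tendsto (fun n => f (u n)) atTop (𝓝 (f x))) :
    Continuous ((⋂ n, s n).domRestrict f) :=
  continuous_iff_seqContinuous.2 fun {u} {x} hux =>
    hf x (fun n => u n) (fun n => mem_iInter.1 (u n).2 n)
      ((continuous_subtype_val.tendsto x).comp hux)

/-- By compactness of `K`, a sequence of counterexamples `x n ∈ s n ∩ K` has a convergent
subsequence, to which `hh` applies since `s` is antitone. -/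
theorem eventually_forall_mem_of_tendsto_comp [FirstCountableTopology X] {Y : Type*}
    [TopologicalSpace Y] {s : ℕ → Set X} (hanti : Antitone s) {K : Set X} (hK : IsCompact K)
    {h : X → Y} {y : Y}
    (hh : ∀ (x : X) (u : ℕ → X), (∀ n, u n ∈ s n) → Tendsto u atTop (𝓝 x) →
      Tendsto (fun n => h (u n)) atTop (𝓝 y))
    {U : Set Y} (hU : U ∈ 𝓝 y) :
    ∀ᶠ n in atTop, ∀ x ∈ s n ∩ K, h x ∈ U := by
  by_contra hcon
  obtain ⟨θ, hθ, hbad⟩ := extraction_of_frequently_atTop (not_eventually.1 hcon)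
  simp only [not_forall, exists_prop] at hbad
  choose x hxsK hxU using hbad
  obtain ⟨a, -, ρ, hρ, hxa⟩ := hK.tendsto_subseq fun n => (hxsK n).2
  have hmem : ∀ n, x (ρ n) ∈ s n := fun n =>
    hanti (hρ.le_apply.trans hθ.le_apply) (hxsK (ρ n)).1
  obtain ⟨n, hn⟩ := ((hh a _ hmem hxa).eventually hU).exists
  exact hxU (ρ n) hn

theorem exists_continuous_hasCompactSupport_eqOn [NormalSpace X] [RegularSpace X]
    [LocallyCompactSpace X] {C : Set X} (hC : IsClosed C) {f : X → ℝ}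
    (hf : Continuous (C.domRestrict f)) (hfs : HasCompactSupport f) :
    ∃ g : X → ℝ, Continuous g ∧ HasCompactSupport g ∧ EqOn g f C := by
  obtain ⟨g, hg⟩ := ContinuousMap.exists_restrict_eq hC ⟨C.domRestrict f, hf⟩
  obtain ⟨φ, hφ1, -, hφs, -⟩ :=
    exists_continuous_one_zero_of_isCompact hfs isClosed_empty (disjoint_empty _)
  refine ⟨φ * g, (map_continuous φ).mul (map_continuous g), hφs.mul_right, fun x hx => ?_⟩
  have hgx : g x = f x := DFunLike.congr_fun hg ⟨x, hx⟩
  by_cases hfx : f x = 0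
  · simp [hgx, hfx]
  · simp [hgx, hφ1 (subset_tsupport f hfx)]

theorem eventually_forall_norm_sub_le_of_eqOn_iInter [FirstCountableTopology X]
    {s : ℕ → Set X} (hs : ∀ n, IsClosed (s n)) (hanti : Antitone s) {f g : X → ℝ}
    (hf : ∀ (x : X) (u : ℕ → X), (∀ n, u n ∈ s n) → Tendsto u atTop (𝓝 x) →
      Tendsto (fun n => f (u n)) atTop (𝓝 (f x)))
    (hg : Continuous g) (hfg : EqOn g f (⋂ n, s n)) {K : Set X} (hK : IsCompact K) {ε : ℝ}
    (hε : 0 < ε) : ∀ᶠ n in atTop, ∀ x ∈ s n ∩ K, ‖f x - g x‖ ≤ ε := by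
  have hsub : ∀ (x : X) (u : ℕ → X), (∀ n, u n ∈ s n) → Tendsto u atTop (𝓝 x) →
      Tendsto (fun n => (f - g) (u n)) atTop (𝓝 0) := fun x u hu hux => by
    simpa [hfg (mem_iInter_of_tendsto_of_antitone hs hanti hu hux)] using
      (hf x u hu hux).sub ((hg.tendsto x).comp hux)
  filter_upwards [eventually_forall_mem_of_tendsto_comp hanti hK hsub
    (Metric.closedBall_mem_nhds 0 hε)] with n hn x hx
  simpa using hn x hx

end Topology

theorem tendsto_zero_of_forall_eventually_abs_le_mul {ι : Type*} {l : Filter ι} {a b : ι → ℝ}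
    {c : ℝ} (hb : Tendsto b l (𝓝 c)) (hab : ∀ ε > 0, ∀ᶠ i in l, |a i| ≤ ε * b i) :
    Tendsto a l (𝓝 0) := by
  rw [Metric.tendsto_nhds]
  intro ε hε
  have hδ : 0 < ε / (|c| + 2) := by positivity
  filter_upwards [hab _ hδ, hb.eventually (gt_mem_nhds (lt_of_le_of_lt (le_abs_self c)
    (lt_add_one |c|)))] with i hi hbi
  rw [Real.dist_0_eq_abs]
  calc |a i| ≤ ε / (|c| + 2) * b i := hi
    _ ≤ ε / (|c| + 2) * (|c| + 1) := by gcongr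
    _ < ε := by
      rw [div_mul_eq_mul_div, div_lt_iff₀ (by positivity)]
      nlinarith

theorem aemeasurable_of_measurable_subtype_of_ae_mem {X β : Type*} [MeasurableSpace X]
    [MeasurableSpace β] {μ : Measure X} {f : X → β} {s : Set X}
    (hs : MeasurableSet s) (hμs : ∀ᵐ x ∂μ, x ∈ s) (hf : Measurable fun x : s => f x) :
    AEMeasurable f μ :=
  Measure.restrict_eq_self_of_ae_mem hμs ▸ aemeasurable_restrict_of_measurable_subtype hs hf

theorem tendsto_integral_sub_of_forall_eventually_ae_norm_sub_le {X ι : Type*} [MeasurableSpace X]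
    {μ : ι → Measure X} {l : Filter ι} {f g ψ : X → ℝ} {c : ℝ}
    (hf : ∀ i, AEStronglyMeasurable f (μ i)) (hg : ∀ i, Integrable g (μ i))
    (hψ : ∀ i, Integrable ψ (μ i)) (hψc : Tendsto (fun i => ∫ x, ψ x ∂μ i) l (𝓝 c))
    (hfg : ∀ ε > 0, ∀ᶠ i in l, ∀ᵐ x ∂μ i, ‖f x - g x‖ ≤ ε * ψ x) :
    Tendsto (fun i => ∫ x, f x ∂μ i - ∫ x, g x ∂μ i) l (𝓝 0) := by
  refine tendsto_zero_of_forall_eventually_abs_le_mul hψc fun ε hε => ?_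
  filter_upwards [hfg ε hε] with i hi
  have hεψ : Integrable (fun x => ε * ψ x) (μ i) := (hψ i).const_mul ε
  have hfgi : Integrable (fun x => f x - g x) (μ i) := hεψ.mono' ((hf i).sub (hg i).1) hi
  have hfi : Integrable f (μ i) := (hfgi.add (hg i)).congr (.of_forall fun x => sub_add_cancel _ _)
  rw [← integral_sub hfi (hg i), ← integral_const_mul, ← Real.norm_eq_abs]
  exact norm_integral_le_of_norm_le hεψ hi

section Measure

variable {X : Type*} [TopologicalSpace X] [MeasurableSpace X]

theorem measureSupport_eq_support (μ : Measure X) : measureSupport μ = μ.support := by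
  rw [Measure.support_eq_forall_isOpen]
  exact Set.ext fun x => forall_congr' fun U => imp.swap

theorem ae_mem_measureSupport {μ : Measure X} [μ.Regular] : ∀ᵐ x ∂μ, x ∈ measureSupport μ := by
  rw [measureSupport_eq_support]
  exact Measure.support_mem_ae_of_regular

/-- Weak-* convergence of Radon measures; the hypothesis `hconv` is `TendstoVaguely α atTop αlim`. -/
def TendstoVaguely {ι : Type*} (μ : ι → Measure X) (l : Filter ι) (ν : Measure X) : Prop :=
  ∀ G : X → ℝ, Continuous G → HasCompactSupport G →
    Tendsto (fun i => ∫ x, G x ∂μ i) l (𝓝 (∫ x, G x ∂ν))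

/-- A bump function at a point outside `C` integrates to zero against eventually every `μ i`,
hence against `ν`. -/
theorem TendstoVaguely.support_subset [OpensMeasurableSpace X] [RegularSpace X]
    [LocallyCompactSpace X] {ι : Type*} {μ : ι → Measure X} {l : Filter ι} [l.NeBot]
    {ν : Measure X} [IsFiniteMeasureOnCompacts ν] (h : TendstoVaguely μ l ν) {C : Set X}
    (hC : IsClosed C) (hμC : ∀ᶠ i in l, ∀ᵐ x ∂μ i, x ∈ C) : ν.support ⊆ C := by
  intro x hx
  by_contra hxC
  obtain ⟨ψ, hψ1, hψ0, hψs, hψI⟩ :=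
    exists_continuous_one_zero_of_isCompact isCompact_singleton hC (disjoint_singleton_left.2 hxC)
  have hμψ : ∀ᶠ i in l, ∫ y, ψ y ∂μ i = 0 := hμC.mono fun i hi =>
    integral_eq_zero_of_ae (hi.mono fun y hy => hψ0 hy)
  have hνψ : ∫ y, ψ y ∂ν = 0 :=
    tendsto_nhds_unique (h ψ (map_continuous ψ) hψs) (tendsto_const_nhds.congr' (hμψ.mono
      fun i hi => hi.symm))
  have hψν : (ψ : X → ℝ) =ᵐ[ν] 0 := (integral_eq_zero_iff_of_nonneg (fun y => (hψI y).1)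
    ((map_continuous ψ).integrable_of_hasCompactSupport hψs)).1 hνψ
  refine ((Measure.mem_support_iff_forall x).1 hx _
    ((isOpen_ne_fun (map_continuous ψ) continuous_const).mem_nhds ?_)).ne' (ae_iff.1 hψν)
  rw [mem_ofPred_eq, hψ1 (mem_singleton x)]
  exact one_ne_zero

theorem TendstoVaguely.ae_mem_iInter [OpensMeasurableSpace X] [RegularSpace X]
    [LocallyCompactSpace X] {μ : ℕ → Measure X} {ν : Measure X} [ν.Regular]
    (h : TendstoVaguely μ atTop ν) {s : ℕ → Set X} (hs : ∀ n, IsClosed (s n))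
    (hanti : Antitone s) (hμs : ∀ n, ∀ᵐ x ∂μ n, x ∈ s n) : ∀ᵐ x ∂ν, x ∈ ⋂ n, s n := by
  have hsub : ν.support ⊆ ⋂ n, s n := subset_iInter fun n =>
    h.support_subset (hs n) <| (eventually_ge_atTop n).mono fun k hk =>
      (hμs k).mono fun x hx => hanti hk hx
  filter_upwards [Measure.support_mem_ae_of_regular (μ := ν)] with x hx using hsub hx

end Measure

theorem integral_tendsto_of_weakstar_and_shrinking_supports_general
    {X : Type*} [TopologicalSpace X] [LocallyCompactSpace X]
    [TopologicalSpace.MetrizableSpace X] [MeasurableSpace X] [BorelSpace X]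
    (Xs : ℕ → Set X) (hXcl : ∀ m, IsClosed (Xs m)) (hXmono : ∀ m, Xs (m + 1) ⊆ Xs m)
    (α : ℕ → Measure X) (αlim : Measure X)
    (hreg : ∀ m, (α m).Regular) (hregLim : αlim.Regular)
    (hsupp : ∀ m, measureSupport (α m) ⊆ Xs m)
    (hconv : ∀ G : X → ℝ, Continuous G → HasCompactSupport G →
      Tendsto (fun m => ∫ x, G x ∂(α m)) atTop (𝓝 (∫ x, G x ∂αlim)))
    (F : X → ℝ)
    (hFsupp : IsCompact (closure (Function.support F)))
    (hFseq : ∀ (x : X) (u : ℕ → X), (∀ m, u m ∈ Xs m) → Tendsto u atTop (𝓝 x) →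
      Tendsto (fun m => F (u m)) atTop (𝓝 (F x)))
    (hFmeas : ∀ m, Measurable (fun y : measureSupport (α m) => F (y : X))) :
    Tendsto (fun m => ∫ x, F x ∂(α m)) atTop (𝓝 (∫ x, F x ∂αlim)) := by
  have hanti : Antitone Xs := antitone_nat_of_succ_le hXmono
  have hαXs : ∀ m, ∀ᵐ x ∂α m, x ∈ measureSupport (α m) := fun m => ae_mem_measureSupport
  obtain ⟨G, hGc, hGs, hGF⟩ := exists_continuous_hasCompactSupport_eqOn
    (isClosed_iInter hXcl) (continuous_restrict_iInter_of_tendsto_comp hFseq) hFsupp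
  have hlim : ∫ x, F x ∂αlim = ∫ x, G x ∂αlim := by
    refine integral_congr_ae ?_
    filter_upwards [TendstoVaguely.ae_mem_iInter hconv hXcl hanti fun m =>
      (hαXs m).mono fun x hx => hsupp m hx] with x hx using (hGF hx).symm
  obtain ⟨ψ, hψ1, -, hψs, hψI⟩ := exists_continuous_one_zero_of_isCompact
    (hFsupp.union hGs) isClosed_empty (disjoint_empty _)
  have hclose : ∀ ε > 0, ∀ᶠ m in atTop, ∀ᵐ x ∂α m, ‖F x - G x‖ ≤ ε * ψ x := fun ε hε => by
    filter_upwards [eventually_forall_norm_sub_le_of_eqOn_iInter hXcl hanti hFseq hGc hGF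
      (hFsupp.union hGs) hε] with m hm
    filter_upwards [hαXs m] with x hx
    by_cases hxK : x ∈ tsupport F ∪ tsupport G
    · simpa [hψ1 hxK] using hm x ⟨hsupp m hx, hxK⟩
    · simp [image_eq_zero_of_notMem_tsupport fun h => hxK (.inl h),
        image_eq_zero_of_notMem_tsupport fun h => hxK (.inr h), mul_nonneg hε.le (hψI x).1]
  have hFae : ∀ m, AEStronglyMeasurable F (α m) := fun m =>
    (aemeasurable_of_measurable_subtype_of_ae_mem
      (measureSupport_eq_support (α m) ▸ Measure.isClosed_support).measurableSet
      (hαXs m) (hFmeas m)).aestronglyMeasurable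
  have hdiff := tendsto_integral_sub_of_forall_eventually_ae_norm_sub_le hFae
    (fun _ => hGc.integrable_of_hasCompactSupport hGs)
    (fun _ => (map_continuous ψ).integrable_of_hasCompactSupport hψs)
    (hconv ψ (map_continuous ψ) hψs) hclose
  rw [hlim]
  simpa using hdiff.add (hconv G hGc hGs)

/-- If Radon measures `α m` supported in a decreasing sequence of closed sets `Xs m`
converge weak-* to `αlim`, and `F` is a bounded precompactly-supported function which is
continuous along sequences `x_m ∈ Xs m`, and measurable on each support, then the
integrals of `F` converge. -/
theorem integral_tendsto_of_weakstar_and_shrinking_supports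
    {X : Type*} [TopologicalSpace X] [LocallyCompactSpace X]
    [TopologicalSpace.MetrizableSpace X] [MeasurableSpace X] [BorelSpace X]
    (Xs : ℕ → Set X) (hXcl : ∀ m, IsClosed (Xs m)) (hXmono : ∀ m, Xs (m + 1) ⊆ Xs m)
    (α : ℕ → Measure X) (αlim : Measure X)
    (hreg : ∀ m, (α m).Regular) (hregLim : αlim.Regular)
    (hsupp : ∀ m, measureSupport (α m) ⊆ Xs m)
    (hconv : ∀ G : X → ℝ, Continuous G → HasCompactSupport G →
      Tendsto (fun m => ∫ x, G x ∂(α m)) atTop (𝓝 (∫ x, G x ∂αlim)))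
    (F : X → ℝ) (hFbdd : ∃ M : ℝ, ∀ x, |F x| ≤ M)
    (hFsupp : IsCompact (closure (Function.support F)))
    (hFseq : ∀ (x : X) (u : ℕ → X), (∀ m, u m ∈ Xs m) → Tendsto u atTop (𝓝 x) →
      Tendsto (fun m => F (u m)) atTop (𝓝 (F x)))
    (hFmeas : ∀ m, Measurable (fun y : measureSupport (α m) => F (y : X))) :
    Tendsto (fun m => ∫ x, F x ∂(α m)) atTop (𝓝 (∫ x, F x ∂αlim)) :=
  integral_tendsto_of_weakstar_and_shrinking_supports_general Xs hXcl hXmono α αlim hreg hregLim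
    hsupp hconv F hFsupp hFseq hFmeas
end

section
/- Let X be a locally compact metrizable space, D ⊆ X a compact set, and μ, (μ_m) finite Borel measures on X with μ_m → μ weak-*. Suppose D admits a finite cover by open balls B(x_1, t_1), …, B(x_q, t_q), and for each i there is a radius r_i < t_i with μ(S(x_i, r_i)) = 0, where S(x, r) denotes the metric sphere. Then limsup_{m→∞} μ_m(⋃_{i≤q} closure(B(x_i, r_i))) ≤ μ(⋃_{i≤q} closure(B(x_i, r_i))), provided that for every closed set F contained in one of the balls B(x_i, t_i) one has limsup_m μ_m(F) ≤ μ(F). -/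
open Filter Topology MeasureTheory Metric

open scoped ENNReal

/-!
Add the closed sets `K i = closure (ball (x i) (r i))` one at a time, replacing each new `K a` by
`K a \ interior A`, where `A` is the union of the previous ones. This set is still closed and
contained in `ball (x a) (t a)`, and it meets `A` only inside the frontiers of the `K i`, which are
`μ`-null. The limsup inequality therefore passes to the union, because `μ` is additive on sets
with null overlap while `limsup` of the `μs m` is subadditive.
-/

theorem ENNReal.limsup_add_le' {α : Type*} {l : Filter α} (u v : α → ℝ≥0∞) :
    limsup (u + v) l ≤ limsup u l + limsup v l := by
  refine ENNReal.le_of_forall_pos_le_add fun ε hε hlt => limsup_le_of_le (by isBoundedDefault) ?_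
  have hε2 : (ε / 2 : ℝ≥0∞) ≠ 0 := by simpa using hε.ne'
  obtain ⟨hu, hv⟩ := ENNReal.add_lt_top.mp hlt
  filter_upwards [eventually_lt_of_limsup_lt (ENNReal.lt_add_right hu.ne hε2),
    eventually_lt_of_limsup_lt (ENNReal.lt_add_right hv.ne hε2)] with n hun hvn
  calc u n + v n ≤ limsup u l + ε / 2 + (limsup v l + ε / 2) := add_le_add hun.le hvn.le
    _ = limsup u l + limsup v l + ε := by rw [add_add_add_comm, ENNReal.add_halves]

theorem union_sdiff_interior_self {X : Type*} [TopologicalSpace X] (A K : Set X) :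
    A ∪ K \ interior A = A ∪ K :=
  subset_antisymm (Set.union_subset_union_right A Set.sdiff_subset)
    (Set.union_sdiff_self (s := A) (t := K) ▸
      Set.union_subset_union_right A (Set.sdiff_subset_sdiff_right interior_subset))

section

variable {α X : Type*} [MeasurableSpace X] {l : Filter α} {μs : α → Measure X}
  {μ : Measure X}

theorem limsup_measure_union_le_of_inter_null {A C : Set X} (hA : MeasurableSet A)
    (hAl : limsup (fun n => μs n A) l ≤ μ A) (hCl : limsup (fun n => μs n C) l ≤ μ C)
    (hAC : μ (A ∩ C) = 0) :
    limsup (fun n => μs n (A ∪ C)) l ≤ μ (A ∪ C) :=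
  calc limsup (fun n => μs n (A ∪ C)) l
      ≤ limsup ((fun n => μs n A) + fun n => μs n C) l :=
        limsup_le_limsup (Eventually.of_forall fun n => measure_union_le A C)
    _ ≤ μ A + μ C := (ENNReal.limsup_add_le' _ _).trans (add_le_add hAl hCl)
    _ = μ (A ∪ C) := by rw [← measure_union_add_inter' hA C, hAC, add_zero]

variable [TopologicalSpace X] [OpensMeasurableSpace X]

theorem limsup_measure_biUnion_le_of_frontier_null {ι : Type*} (K : ι → Set X)
    (hK : ∀ i, IsClosed (K i)) (hfrontier : ∀ i, μ (frontier (K i)) = 0)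
    (hsub : ∀ i, ∀ F ⊆ K i, IsClosed F → limsup (fun n => μs n F) l ≤ μ F)
    (s : Finset ι) :
    limsup (fun n => μs n (⋃ i ∈ s, K i)) l ≤ μ (⋃ i ∈ s, K i) := by
  classical
  induction s using Finset.induction_on with
  | empty => simpa using limsup_const_bot (α := ℝ≥0∞) (f := l)
  | insert a s _ ih =>
    set A := ⋃ i ∈ s, K i
    have hA : IsClosed A := s.finite_toSet.isClosed_biUnion fun i _ => hK i
    -- A point of `A` outside `interior A` lies on the frontier of every `K i` containing it.
    have hinter : A ∩ (K a \ interior A) ⊆ ⋃ i ∈ s, frontier (K i) := by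
      rintro z ⟨hzA, -, hz⟩
      obtain ⟨i, hi, hzi⟩ := Set.mem_iUnion₂.mp hzA
      refine Set.mem_biUnion hi ((hK i).frontier_eq ▸ ⟨hzi, fun hint => hz ?_⟩)
      exact interior_mono (Set.subset_biUnion_of_mem (u := K) hi) hint
    rw [Finset.set_biUnion_insert, Set.union_comm, ← union_sdiff_interior_self]
    refine limsup_measure_union_le_of_inter_null hA.measurableSet ih ?_
      (measure_mono_null hinter <|
        (measure_biUnion_null_iff s.countable_toSet).2 fun i _ => hfrontier i)
    exact hsub a _ Set.sdiff_subset ((hK a).sdiff isOpen_interior)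

end

theorem limsup_measure_union_closure_balls_le_general
    {X : Type*} [MetricSpace X]
    [MeasurableSpace X] [BorelSpace X]
    (μs : ℕ → Measure X) (μ : Measure X)
    (q : ℕ) (x : Fin q → X) (t r : Fin q → ℝ)
    (hr : ∀ i, r i < t i)
    (hsphere : ∀ i, μ (sphere (x i) (r i)) = 0)
    (hclosed : ∀ F : Set X, IsClosed F → (∃ i, F ⊆ ball (x i) (t i)) →
      limsup (fun m => μs m F) atTop ≤ μ F) :
    limsup (fun m => μs m (⋃ i, closure (ball (x i) (r i)))) atTop
      ≤ μ (⋃ i, closure (ball (x i) (r i))) := by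
  have hfrontier (i : Fin q) : μ (frontier (closure (ball (x i) (r i)))) = 0 :=
    measure_mono_null (frontier_closure_subset.trans frontier_ball_subset_sphere) (hsphere i)
  have hsub (i : Fin q) (F : Set X) (hF : F ⊆ closure (ball (x i) (r i))) (hFc : IsClosed F) :
      limsup (fun m => μs m F) atTop ≤ μ F :=
    hclosed F hFc
      ⟨i, hF.trans (closure_ball_subset_closedBall.trans (closedBall_subset_ball (hr i)))⟩
  simpa using limsup_measure_biUnion_le_of_frontier_null _ (fun _ => isClosed_closure)
    hfrontier hsub Finset.univ

/-- Covering/portmanteau argument: if `μs m → μ` weak-*, `D` is compact covered by balls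
`B(x i, t i)`, radii `r i < t i` are chosen with `μ`-null spheres `S(x i, r i)`, and
the limsup inequality holds for closed sets contained in one of the balls `B(x i, t i)`,
then `limsup μs m (⋃ i, closure B(x i, r i)) ≤ μ (⋃ i, closure B(x i, r i))`. -/
theorem limsup_measure_union_closure_balls_le
    {X : Type*} [MetricSpace X] [LocallyCompactSpace X]
    [MeasurableSpace X] [BorelSpace X]
    (D : Set X) (hD : IsCompact D)
    (μs : ℕ → Measure X) (μ : Measure X)
    (hfin : ∀ m, IsFiniteMeasure (μs m)) (hfinμ : IsFiniteMeasure μ)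
    (hconv : ∀ G : X → ℝ, Continuous G → HasCompactSupport G →
      Tendsto (fun m => ∫ x, G x ∂(μs m)) atTop (𝓝 (∫ x, G x ∂μ)))
    (q : ℕ) (x : Fin q → X) (t r : Fin q → ℝ)
    (hcover : D ⊆ ⋃ i, ball (x i) (t i))
    (hr : ∀ i, r i < t i)
    (hsphere : ∀ i, μ (sphere (x i) (r i)) = 0)
    (hclosed : ∀ F : Set X, IsClosed F → (∃ i, F ⊆ ball (x i) (t i)) →
      limsup (fun m => μs m F) atTop ≤ μ F) :
    limsup (fun m => μs m (⋃ i, closure (ball (x i) (r i)))) atTop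
      ≤ μ (⋃ i, closure (ball (x i) (r i))) :=
  limsup_measure_union_closure_balls_le_general μs μ q x t r hr hsphere hclosed
end

section
/- Let g be a cubical automorphism of a CAT(0) cube complex X̃. If g has an invariant combinatorial geodesic on the first cubical barycentric subdivision of X̃ or fixes a point, then twice the stable translation length of g with respect to the combinatorial metric on the 1-skeleton of X̃ is a nonnegative integer. Consequently, if a group Γ acts geometrically on X̃, then 2·ℓ_{X̃}[g] ∈ ℤ for all g ∈ Γ. -/
open Filter Topology

/-- Base point independence: if the ratio converges for `w`, it converges for any `v`. -/
lemma aux_basepoint {V : Type*} [MetricSpace V] (g : V → V) (hg : Isometry g)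
    (w : V) (L : ℝ)
    (hw : Tendsto (fun m : ℕ => dist (g^[m] w) w / m) atTop (𝓝 L)) (v : V) :
    Tendsto (fun m : ℕ => dist (g^[m] v) v / m) atTop (𝓝 L) := by
  have hiso : ∀ m : ℕ, Isometry (g^[m]) := fun m => by
    induction m with
    | zero => exact isometry_id
    | succ n ih => rw [Function.iterate_succ']; exact hg.comp ih
  have key : ∀ m : ℕ, |dist (g^[m] v) v - dist (g^[m] w) w| ≤ 2 * dist v w := by
    intro m
    have h1 : dist (g^[m] v) v ≤ dist (g^[m] w) w + 2 * dist v w := by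
      calc dist (g^[m] v) v ≤ dist (g^[m] v) (g^[m] w) + dist (g^[m] w) w + dist w v :=
            dist_triangle4 _ _ _ _
        _ = dist v w + dist (g^[m] w) w + dist w v := by rw [(hiso m).dist_eq]
        _ = dist (g^[m] w) w + 2 * dist v w := by rw [dist_comm w v]; ring
    have h2 : dist (g^[m] w) w ≤ dist (g^[m] v) v + 2 * dist v w := by
      calc dist (g^[m] w) w ≤ dist (g^[m] w) (g^[m] v) + dist (g^[m] v) v + dist v w :=
            dist_triangle4 _ _ _ _
        _ = dist w v + dist (g^[m] v) v + dist v w := by rw [(hiso m).dist_eq]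
        _ = dist (g^[m] v) v + 2 * dist v w := by rw [dist_comm w v]; ring
    rw [abs_sub_le_iff]; constructor <;> linarith
  have hzero : Tendsto (fun m : ℕ => dist (g^[m] v) v / m - dist (g^[m] w) w / m)
      atTop (𝓝 0) := by
    refine squeeze_zero_norm (fun m => ?_) (tendsto_const_div_atTop_nhds_zero_nat (2 * dist v w))
    rcases Nat.eq_zero_or_pos m with hm | hm
    · simp [hm]
    · have hm' : (0:ℝ) < m := by exact_mod_cast hm
      rw [Real.norm_eq_abs, div_sub_div_same, abs_div, abs_of_pos hm',
        div_le_div_iff_of_pos_right hm']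
      exact key m
  have := hzero.add hw
  simp only [sub_add_cancel, zero_add] at this
  exact this

/-- If an automorphism `g` of (the vertex set of) a CAT(0) cube complex, viewed as an
isometry of the 1-skeleton with the combinatorial metric, either fixes a point or
translates along an invariant combinatorial geodesic of the first cubical barycentric
subdivision (where edge lengths are `1/2`), then the stable translation length `L` of `g`
exists, is independent of the base point, and satisfies `2L ∈ ℤ≥0`. -/
theorem two_mul_stable_translation_length_integer
    {V : Type*} [MetricSpace V] (g : V → V) (hg : Isometry g)
    (hyp : (∃ v : V, g v = v) ∨
      ∃ (σ : ℤ → V) (N : ℤ),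
        (∀ i j : ℤ, dist (σ i) (σ j) = |(i : ℝ) - (j : ℝ)| / 2) ∧
        ∀ i : ℤ, g (σ i) = σ (i + N)) :
    ∃ L : ℝ,
      (∀ v : V, Tendsto (fun m : ℕ => dist (g^[m] v) v / m) atTop (𝓝 L)) ∧
      ∃ k : ℕ, 2 * L = (k : ℝ) := by
  rcases hyp with ⟨w, hw⟩ | ⟨σ, N, hσd, hσg⟩
  · refine ⟨0, fun v => aux_basepoint g hg w 0 ?_ v, 0, by norm_num⟩
    have : ∀ m : ℕ, g^[m] w = w := by
      intro m; induction m with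
      | zero => rfl
      | succ n ih => rw [Function.iterate_succ_apply', ih, hw]
    simp only [this, dist_self, zero_div]
    exact tendsto_const_nhds
  · have hiter : ∀ m : ℕ, g^[m] (σ 0) = σ (m * N) := by
      intro m; induction m with
      | zero => simp
      | succ n ih =>
          rw [Function.iterate_succ_apply', ih, hσg]
          congr 1; push_cast; ring
    refine ⟨|(N:ℝ)| / 2, fun v => aux_basepoint g hg (σ 0) _ ?_ v, N.natAbs, ?_⟩
    · apply Tendsto.congr' (f₁ := fun _ : ℕ => |(N:ℝ)| / 2)
      · filter_upwards [eventually_ge_atTop 1] with m hm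
        have hm' : (0:ℝ) < m := by exact_mod_cast hm
        rw [hiter, hσd]
        push_cast
        rw [sub_zero, abs_mul, abs_of_pos hm']
        field_simp
      · exact tendsto_const_nhds
    · rw [mul_div_cancel₀ _ (two_ne_zero), ← Int.cast_abs, Int.abs_eq_natAbs,
        Int.cast_natCast]
end

section
/- Let X be a geodesic metric space, Γ a group acting on X by isometries, and suppose η is a Γ-invariant pseudometric on X that is additive along geodesics of X (i.e., η(x, z) = η(x, y) + η(y, z) whenever y lies on a geodesic segment from x to z). Let a, b ∈ Γ and suppose there is a point x ∈ X lying on an axis of ab such that x, b·x, and ab·x lie in this order on a geodesic of X. If moreover η(g^m x, x) = m·η(g x, x) fails in general but the stable translation lengths ℓ_η[g] := lim_m η(g^m x, x)/m exist, then ℓ_η[ab] = η(ab·x, x) implies ℓ_η[ab] ≥ ℓ_η[a] + ℓ_η[b]. -/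
open Filter Topology

/-- If `η` is a `Γ`-invariant pseudometric on a geodesic space `X`, additive along
geodesics, and `x`, `b • x`, `(a*b) • x` lie in this order on a geodesic, then
`ℓ_η[ab] = η((ab) • x, x)` implies `ℓ_η[ab] ≥ ℓ_η[a] + ℓ_η[b]` for the stable
translation lengths `ℓ_η`. -/
theorem stable_length_superadditive_of_aligned_axis
    {Γ X : Type*} [Group Γ] [MetricSpace X] [MulAction Γ X]
    (hiso : ∀ γ : Γ, Isometry (fun x : X => γ • x))
    (η : X → X → ℝ)
    (hηinv : ∀ (γ : Γ) (x y : X), η (γ • x) (γ • y) = η x y)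
    (hηself : ∀ x : X, η x x = 0)
    (hηsymm : ∀ x y : X, η x y = η y x)
    (hηnonneg : ∀ x y : X, 0 ≤ η x y)
    (hηtri : ∀ x y z : X, η x z ≤ η x y + η y z)
    (hadd : ∀ x y z : X, dist x y + dist y z = dist x z → η x z = η x y + η y z)
    (a b : Γ) (x : X)
    (hbetween : dist x (b • x) + dist (b • x) ((a * b) • x) = dist x ((a * b) • x))
    (ℓ : Γ → ℝ)
    (hℓ : ∀ (γ : Γ) (y : X),
      Tendsto (fun m : ℕ => η ((γ ^ m) • y) y / m) atTop (𝓝 (ℓ γ)))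
    (hval : ℓ (a * b) = η ((a * b) • x) x) :
    ℓ a + ℓ b ≤ ℓ (a * b) := by
  -- key: ℓ γ ≤ η (γ • y) y for all y
  have key : ∀ (γ : Γ) (y : X), ℓ γ ≤ η (γ • y) y := by
    intro γ y
    have hbound : ∀ m : ℕ, η ((γ ^ m) • y) y ≤ m * η (γ • y) y := by
      intro m
      induction m with
      | zero => simp [hηself y]
      | succ n ih =>
        have h1 : η ((γ ^ (n + 1)) • y) y ≤
            η ((γ ^ (n + 1)) • y) (γ • y) + η (γ • y) y := hηtri _ _ _
        have h2 : η ((γ ^ (n + 1)) • y) (γ • y) = η ((γ ^ n) • y) y := by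
          have : (γ ^ (n + 1)) • y = γ • ((γ ^ n) • y) := by
            rw [pow_succ']; rw [mul_smul]
          rw [this, hηinv]
        push_cast
        calc η ((γ ^ (n + 1)) • y) y ≤ η ((γ ^ n) • y) y + η (γ • y) y := by
              rw [← h2]; exact h1
          _ ≤ n * η (γ • y) y + η (γ • y) y := by
              have := ih; linarith
          _ = (n + 1) * η (γ • y) y := by ring
    refine le_of_tendsto (hℓ γ y) ?_
    filter_upwards [eventually_ge_atTop 1] with m hm
    have hm' : (0 : ℝ) < m := by exact_mod_cast hm
    rw [div_le_iff₀ hm']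
    calc η ((γ ^ m) • y) y ≤ m * η (γ • y) y := hbound m
      _ = η (γ • y) y * m := by ring
  have hsplit : η x ((a * b) • x) = η x (b • x) + η (b • x) ((a * b) • x) :=
    hadd _ _ _ hbetween
  have h1 : η (b • x) ((a * b) • x) = η (a • (b • x)) (b • x) := by
    rw [hηsymm, mul_smul]
  have ha : ℓ a ≤ η (a • (b • x)) (b • x) := key a (b • x)
  have hb : ℓ b ≤ η (b • x) x := key b x
  rw [hval, hηsymm, hsplit, h1]
  have := hηsymm (b • x) x
  linarith
end

section
/- Let G be a group acting on a set X, let 𝕎 be a G-invariant wallspace structure on X, and let X̃ be the CAT(0) cube complex dual to 𝕎. Then there is a G-equivariant bijection between 𝕎 and the set of hyperplanes of X̃, and for any two vertices v, w of X̃ the combinatorial distance d_{X̃}(v, w) equals the number of walls W ∈ 𝕎 on which the orientations v and w differ, i.e., #{W ∈ 𝕎 : v(W) ≠ w(W)}. -/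
open scoped Pointwise

/-- A wall of a set `X`: an unordered pair `{U, U*}` of nonempty proper subsets covering
`X`. -/
def IsWall {X : Type*} (W : Set (Set X)) : Prop :=
  ∃ U Uc : Set X, U ≠ Uc ∧ W = {U, Uc} ∧ U.Nonempty ∧ Uc.Nonempty ∧
    U ∪ Uc = Set.univ ∧ U ≠ Set.univ ∧ Uc ≠ Set.univ

/-- A wall separates `x` and `y` if they lie in distinct open halfspaces. -/
def WallSeparates {X : Type*} (W : Set (Set X)) (x y : X) : Prop :=
  ∃ U ∈ W, ∃ V ∈ W, U ≠ V ∧ x ∈ U ∧ x ∉ V ∧ y ∈ V ∧ y ∉ U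

/-- A wallspace structure: a set of walls such that each point lies in both halfspaces of
only finitely many walls, and any two points are separated by only finitely many walls. -/
def IsWallspace {X : Type*} (𝕎 : Set (Set (Set X))) : Prop :=
  (∀ W ∈ 𝕎, IsWall W) ∧
  (∀ x : X, {W ∈ 𝕎 | ∀ U ∈ W, x ∈ U}.Finite) ∧
  (∀ x y : X, {W ∈ 𝕎 | WallSeparates W x y}.Finite)

/-- Vertices of the CAT(0) cube complex dual to a wallspace: consistent orientations of
the walls differing from a canonical orientation on only finitely many walls. -/
def DualVertex {X : Type*} (𝕎 : Set (Set (Set X))) : Type _ :=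
  {v : 𝕎 → Set X //
    (∀ W : 𝕎, v W ∈ (W : Set (Set X))) ∧
    (∀ W W' : 𝕎, (v W ∩ v W').Nonempty) ∧
    (∃ x : X, {W : 𝕎 | x ∉ v W}.Finite)}

/-- The 1-skeleton of the dual CAT(0) cube complex: two vertices are adjacent iff they
differ on exactly one wall. -/
def dualGraph {X : Type*} (𝕎 : Set (Set (Set X))) : SimpleGraph (DualVertex 𝕎) where
  Adj v w := ∃! W : 𝕎, v.1 W ≠ w.1 W
  symm := by
    constructor
    rintro v w ⟨W, hW, hU⟩
    exact ⟨W, hW.symm, fun W' h' => hU W' h'.symm⟩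
  loopless := by
    constructor
    rintro v ⟨W, hW, -⟩
    exact hW rfl

/-!
Vertices are compared by the set of walls on which they differ; an edge changes one wall, so
this count bounds the length of every path from below. Conversely, if `v ≠ w`, pick a wall `W₀`
on which they differ whose `w`-halfspace is maximal. A wall `W₁` that would make `v`
inconsistent after flipping `W₀` to `w`'s side must consist of the complementary halfspaces
`(w W₀)ᶜ` and `w W₀`; then `W₁` is maximal as well and nothing but `W₁` itself could block
flipping it. So `v` has a neighbour one wall closer to `w`, and the count is realised by a path.
A wall `{U, U*}` separates the vertices pointing at a point outside `U*` and at a point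
outside `U`, and every path between them crosses it.
-/

namespace IsWall

variable {X : Type*} {W : Set (Set X)}

theorem eq_pair_of_ne (hW : IsWall W) {A B : Set X} (hA : A ∈ W) (hB : B ∈ W) (hAB : A ≠ B) :
    W = {A, B} ∧ A ∪ B = Set.univ := by
  obtain ⟨U, Uc, -, rfl, -, -, hcover, -, -⟩ := hW
  simp only [Set.mem_insert_iff, Set.mem_singleton_iff] at hA hB
  rcases hA with rfl | rfl <;> rcases hB with rfl | rfl <;>
    simp_all [Set.pair_comm, Set.union_comm]

theorem exists_mem (hW : IsWall W) (x : X) : ∃ A ∈ W, x ∈ A := by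
  obtain ⟨U, Uc, -, rfl, -, -, hcover, -, -⟩ := hW
  have hx : x ∈ U ∪ Uc := hcover ▸ Set.mem_univ x
  rcases hx with hx | hx
  · exact ⟨U, Or.inl rfl, hx⟩
  · exact ⟨Uc, Or.inr rfl, hx⟩

theorem exists_forall_mem_notMem (hW : IsWall W) : ∃ x y : X, ∀ A ∈ W, x ∈ A → y ∉ A := by
  obtain ⟨U, Uc, -, rfl, -, -, -, hU, hUc⟩ := hW
  obtain ⟨x, hx⟩ := (Set.ne_univ_iff_exists_notMem Uc).1 hUc
  obtain ⟨y, hy⟩ := (Set.ne_univ_iff_exists_notMem U).1 hU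
  refine ⟨x, y, ?_⟩
  rintro A (rfl | rfl | _) <;> simp_all

theorem forall_mem_or_forall_mem_or_separates (hW : IsWall W) {A B : Set X} (hA : A ∈ W)
    (hB : B ∈ W) (hAB : A ≠ B) {x y : X} (hx : x ∈ A) (hy : y ∈ B) :
    (∀ U ∈ W, x ∈ U) ∨ (∀ U ∈ W, y ∈ U) ∨ WallSeparates W x y := by
  rw [(hW.eq_pair_of_ne hA hB hAB).1]
  by_cases hxB : x ∈ B
  · exact Or.inl (by simp [hx, hxB])
  by_cases hyA : y ∈ A
  · exact Or.inr (Or.inl (by simp [hy, hyA]))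
  exact Or.inr (Or.inr ⟨A, by simp, B, by simp, hAB, hx, hxB, hy, hyA⟩)

end IsWall

section WallPerm

variable {X G : Type*} [Group G] [MulAction G X] {𝕎 : Set (Set (Set X))}
  (hGinv : ∀ g : G, ∀ W ∈ 𝕎, g • W ∈ 𝕎)

def wallPerm (g : G) : Equiv.Perm 𝕎 where
  toFun W := ⟨g • (W : Set (Set X)), hGinv g _ W.2⟩
  invFun W := ⟨g⁻¹ • (W : Set (Set X)), hGinv g⁻¹ _ W.2⟩
  left_inv _ := Subtype.ext (inv_smul_smul g _)
  right_inv _ := Subtype.ext (smul_inv_smul g _)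

end WallPerm

namespace DualVertex

variable {X : Type*} {𝕎 : Set (Set (Set X))}

def diffWalls (v w : DualVertex 𝕎) : Set 𝕎 := {W | v.1 W ≠ w.1 W}

theorem diffWalls_eq_empty_iff {v w : DualVertex 𝕎} : v.diffWalls w = ∅ ↔ v = w := by
  refine ⟨fun h => Subtype.ext (funext fun W => ?_), fun h => by simp [h, diffWalls]⟩
  by_contra hW
  exact (Set.eq_empty_iff_forall_notMem.1 h) W hW

theorem diffWalls_subset_union (u v w : DualVertex 𝕎) :
    u.diffWalls w ⊆ u.diffWalls v ∪ v.diffWalls w := by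
  intro W huw
  by_contra h
  simp only [diffWalls, Set.mem_union, Set.mem_ofPred_eq, not_or, not_not] at h huw
  exact huw (h.1.trans h.2)

theorem adj_iff_exists_diffWalls_eq_singleton {v w : DualVertex 𝕎} :
    (dualGraph 𝕎).Adj v w ↔ ∃ W, v.diffWalls w = {W} := by
  simp only [dualGraph, Set.eq_singleton_iff_unique_mem, diffWalls, Set.mem_ofPred_eq]
  rfl

theorem ncard_diffWalls_eq_one_of_adj {v w : DualVertex 𝕎} (h : (dualGraph 𝕎).Adj v w) :
    (v.diffWalls w).ncard = 1 :=
  Set.ncard_eq_one.2 (adj_iff_exists_diffWalls_eq_singleton.1 h)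

theorem finite_diffWalls (hws : IsWallspace 𝕎) (v w : DualVertex 𝕎) :
    (v.diffWalls w).Finite := by
  obtain ⟨x, hx⟩ := v.2.2.2
  obtain ⟨y, hy⟩ := w.2.2.2
  have hval : ∀ s : Set (Set (Set X)), s.Finite → (Subtype.val ⁻¹' s : Set 𝕎).Finite :=
    fun s hs => hs.preimage Subtype.val_injective.injOn
  refine ((hx.union hy).union (((hval _ (hws.2.1 x)).union (hval _ (hws.2.1 y))).union
    (hval _ (hws.2.2 x y)))).subset fun W hW => ?_
  simp only [Set.mem_union, Set.mem_ofPred_eq, Set.mem_preimage, Subtype.coe_prop, true_and]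
  by_cases hxv : x ∈ v.1 W
  · by_cases hyw : y ∈ w.1 W
    · have := (hws.1 W W.2).forall_mem_or_forall_mem_or_separates (v.2.1 W) (w.2.1 W) hW hxv hyw
      tauto
    · tauto
  · tauto

theorem ncard_diffWalls_le_length (hws : IsWallspace 𝕎) {v w : DualVertex 𝕎}
    (p : (dualGraph 𝕎).Walk v w) : (v.diffWalls w).ncard ≤ p.length := by
  induction p with
  | nil => simp [diffWalls]
  | @cons u v w hadj p ih =>
    calc (u.diffWalls w).ncard
        ≤ (u.diffWalls v ∪ v.diffWalls w).ncard :=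
          Set.ncard_le_ncard (diffWalls_subset_union u v w)
            ((finite_diffWalls hws u v).union (finite_diffWalls hws v w))
      _ ≤ (u.diffWalls v).ncard + (v.diffWalls w).ncard := Set.ncard_union_le _ _
      _ ≤ (p.cons hadj).length := by
          rw [ncard_diffWalls_eq_one_of_adj hadj, SimpleGraph.Walk.length_cons]; omega

theorem exists_forall_mem (h𝕎 : ∀ W ∈ 𝕎, IsWall W) (x : X) :
    ∃ v : DualVertex 𝕎, ∀ W, x ∈ v.1 W := by
  choose A hAW hxA using fun W : 𝕎 => (h𝕎 W W.2).exists_mem x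
  exact ⟨⟨A, hAW, fun W W' => ⟨x, hxA W, hxA W'⟩, x, by simp [hxA]⟩, hxA⟩

theorem exists_adj_diffWalls_eq_diff_singleton {v w : DualVertex 𝕎} {W₀ : 𝕎}
    (hW₀ : W₀ ∈ v.diffWalls w) (hcons : ∀ W ≠ W₀, (w.1 W₀ ∩ v.1 W).Nonempty) :
    ∃ v' : DualVertex 𝕎, (dualGraph 𝕎).Adj v v' ∧ v'.diffWalls w = v.diffWalls w \ {W₀} := by
  classical
  have hmem : ∀ W : 𝕎, Function.update v.1 W₀ (w.1 W₀) W ∈ (W : Set (Set X)) := by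
    intro W
    by_cases hW : W = W₀
    · simpa [hW] using w.2.1 W₀
    · simpa [hW] using v.2.1 W
  have hinter : ∀ W W' : 𝕎, (Function.update v.1 W₀ (w.1 W₀) W ∩
      Function.update v.1 W₀ (w.1 W₀) W').Nonempty := by
    intro W W'
    by_cases hW : W = W₀ <;> by_cases hW' : W' = W₀
    · simpa [hW, hW'] using w.2.2.1 W₀ W₀
    · simpa [hW, hW'] using hcons W' hW'
    · simpa [hW, hW', Set.inter_comm] using hcons W hW
    · simpa [hW, hW'] using v.2.2.1 W W'
  have hfin : ∃ x, {W | x ∉ Function.update v.1 W₀ (w.1 W₀) W}.Finite := by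
    obtain ⟨x, hx⟩ := v.2.2.2
    refine ⟨x, (hx.union (Set.finite_singleton W₀)).subset fun W hW => ?_⟩
    rcases eq_or_ne W W₀ with rfl | hW'
    · exact Or.inr rfl
    · exact Or.inl (by simpa [hW'] using hW)
  let v' : DualVertex 𝕎 := ⟨Function.update v.1 W₀ (w.1 W₀), hmem, hinter, hfin⟩
  have hdiff : v'.diffWalls w = v.diffWalls w \ {W₀} := by
    ext W
    rcases eq_or_ne W W₀ with rfl | hW <;> simp [v', diffWalls, *]
  refine ⟨v', adj_iff_exists_diffWalls_eq_singleton.2 ⟨W₀, ?_⟩, hdiff⟩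
  ext W
  rcases eq_or_ne W W₀ with rfl | hW
  · simpa [v', diffWalls] using hW₀
  · simp [v', diffWalls, hW]

theorem eq_compl_pair_of_inter_eq_empty (h𝕎 : ∀ W ∈ 𝕎, IsWall W) {v w : DualVertex 𝕎}
    {W₀ W : 𝕎} (hmax : MaximalFor (· ∈ v.diffWalls w) (fun W => w.1 W) W₀)
    (hblock : w.1 W₀ ∩ v.1 W = ∅) :
    W ∈ v.diffWalls w ∧ w.1 W = w.1 W₀ ∧ (W : Set (Set X)) = {(w.1 W₀)ᶜ, w.1 W₀} := by
  have hW : W ∈ v.diffWalls w := fun h => by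
    simpa [← h, hblock] using w.2.2.1 W₀ W
  obtain ⟨hpair, hcover⟩ := (h𝕎 W W.2).eq_pair_of_ne (v.2.1 W) (w.2.1 W) hW
  have hsub : w.1 W₀ ⊆ w.1 W := fun x hx =>
    (hcover ▸ Set.mem_univ x : x ∈ v.1 W ∪ w.1 W).resolve_left
      fun hxv => hblock.subset ⟨hx, hxv⟩
  have hw : w.1 W = w.1 W₀ := (hmax.2 hW hsub).antisymm hsub
  have hv : v.1 W = (w.1 W₀)ᶜ := by
    rw [← hw]
    refine (IsCompl.eq_compl ⟨?_, ?_⟩)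
    · rw [Set.disjoint_iff_inter_eq_empty, Set.inter_comm, hw]; exact hblock
    · rw [codisjoint_iff]; exact hcover
  exact ⟨hW, hw, by rw [hpair, hv, hw]⟩

theorem exists_mem_diffWalls_forall_inter_nonempty (h𝕎 : ∀ W ∈ 𝕎, IsWall W)
    {v w : DualVertex 𝕎} (hfin : (v.diffWalls w).Finite) (hne : (v.diffWalls w).Nonempty) :
    ∃ W₀ ∈ v.diffWalls w, ∀ W ≠ W₀, (w.1 W₀ ∩ v.1 W).Nonempty := by
  obtain ⟨W₀, hmax₀⟩ := hfin.exists_maximalFor (fun W => w.1 W) _ hne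
  by_cases hfree : ∀ W ≠ W₀, (w.1 W₀ ∩ v.1 W).Nonempty
  · exact ⟨W₀, hmax₀.1, hfree⟩
  push Not at hfree
  obtain ⟨W₁, -, hblock₁⟩ := hfree
  obtain ⟨hW₁, hw₁, hpair₁⟩ := eq_compl_pair_of_inter_eq_empty h𝕎 hmax₀ hblock₁
  have hmax₁ : MaximalFor (· ∈ v.diffWalls w) (fun W => w.1 W) W₁ :=
    ⟨hW₁, fun W hW hle => by simpa [hw₁] using hmax₀.2 hW (by simpa [hw₁] using hle)⟩
  refine ⟨W₁, hW₁, fun W hne => Set.nonempty_iff_ne_empty.2 fun hblock => hne ?_⟩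
  obtain ⟨-, -, hpair⟩ := eq_compl_pair_of_inter_eq_empty h𝕎 hmax₁ hblock
  exact Subtype.ext (by rw [hpair, hpair₁, hw₁])

theorem exists_walk_length_eq_ncard_diffWalls (hws : IsWallspace 𝕎) (v w : DualVertex 𝕎) :
    ∃ p : (dualGraph 𝕎).Walk v w, p.length = (v.diffWalls w).ncard := by
  induction hn : (v.diffWalls w).ncard generalizing v with
  | zero =>
    obtain rfl : v = w := diffWalls_eq_empty_iff.1 <|
      (Set.ncard_eq_zero (finite_diffWalls hws v w)).1 hn
    exact ⟨.nil, rfl⟩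
  | succ n ih =>
    have hne : (v.diffWalls w).Nonempty := Set.nonempty_of_ncard_ne_zero (by omega)
    obtain ⟨W₀, hW₀, hcons⟩ :=
      exists_mem_diffWalls_forall_inter_nonempty hws.1 (finite_diffWalls hws v w) hne
    obtain ⟨v', hadj, hdiff⟩ := exists_adj_diffWalls_eq_diff_singleton hW₀ hcons
    have hn' : (v'.diffWalls w).ncard = n := by
      have := Set.ncard_sdiff_singleton_add_one hW₀ (finite_diffWalls hws v w)
      rw [hdiff]; omega
    obtain ⟨p, hp⟩ := ih v' hn'
    exact ⟨.cons hadj p, by simp [hp]⟩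

theorem dist_eq_ncard_diffWalls (hws : IsWallspace 𝕎) (v w : DualVertex 𝕎) :
    (dualGraph 𝕎).dist v w = (v.diffWalls w).ncard := by
  obtain ⟨p, hp⟩ := exists_walk_length_eq_ncard_diffWalls hws v w
  obtain ⟨q, hq⟩ := p.reachable.exists_walk_length_eq_dist
  exact le_antisymm (hp ▸ SimpleGraph.dist_le p) (hq ▸ ncard_diffWalls_le_length hws q)

theorem exists_adj_ne (hws : IsWallspace 𝕎) (W : 𝕎) :
    ∃ v w : DualVertex 𝕎, (dualGraph 𝕎).Adj v w ∧ v.1 W ≠ w.1 W := by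
  obtain ⟨x, y, hxy⟩ := (hws.1 W W.2).exists_forall_mem_notMem
  obtain ⟨v, hv⟩ := exists_forall_mem hws.1 x
  obtain ⟨w, hw⟩ := exists_forall_mem hws.1 y
  obtain ⟨p, -⟩ := exists_walk_length_eq_ncard_diffWalls hws v w
  obtain ⟨d, -, hd, hd'⟩ := p.exists_boundary_dart {u | u.1 W = v.1 W} rfl
    fun h => hxy _ (v.2.1 W) (hv W) (h ▸ hw W)
  exact ⟨d.fst, d.snd, d.adj, fun h => hd' (h.symm.trans hd)⟩

section Action

variable {G : Type*} [Group G] [MulAction G X] (hGinv : ∀ g : G, ∀ W ∈ 𝕎, g • W ∈ 𝕎)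

def smul (g : G) (v : DualVertex 𝕎) : DualVertex 𝕎 :=
  ⟨fun W => g • v.1 ((wallPerm hGinv g).symm W),
    fun W => by
      rw [← smul_inv_smul g (W : Set (Set X))]
      exact Set.smul_mem_smul_set (v.2.1 ((wallPerm hGinv g).symm W)),
    fun W W' => by
      rw [← Set.smul_set_inter]
      exact (v.2.2.1 _ _).smul_set,
    by
      obtain ⟨x, hx⟩ := v.2.2.2
      refine ⟨g • x, ?_⟩
      simp only [Set.smul_mem_smul_set_iff]
      exact hx.preimage (wallPerm hGinv g).symm.injective.injOn⟩

theorem diffWalls_smul (g : G) (v w : DualVertex 𝕎) :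
    (smul hGinv g v).diffWalls (smul hGinv g w) =
      (wallPerm hGinv g).symm ⁻¹' v.diffWalls w := by
  ext W
  simp [smul, diffWalls]

theorem wallPerm_mem_diffWalls_smul {g : G} {v w : DualVertex 𝕎} {W : 𝕎}
    (hW : W ∈ v.diffWalls w) :
    wallPerm hGinv g W ∈ (smul hGinv g v).diffWalls (smul hGinv g w) := by
  simpa [diffWalls_smul] using hW

theorem adj_smul {g : G} {v w : DualVertex 𝕎} (h : (dualGraph 𝕎).Adj v w) :
    (dualGraph 𝕎).Adj (smul hGinv g v) (smul hGinv g w) := by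
  obtain ⟨W, hW⟩ := adj_iff_exists_diffWalls_eq_singleton.1 h
  refine adj_iff_exists_diffWalls_eq_singleton.2 ⟨wallPerm hGinv g W, ?_⟩
  rw [diffWalls_smul, hW, ← Equiv.image_eq_preimage_symm, Set.image_singleton]

end Action

end DualVertex

/-- Sageev's construction: for a `G`-invariant wallspace `𝕎` on a `G`-set `X`, there is a
`G`-equivariant bijection between walls and hyperplanes of the dual cube complex (each
edge is dual to a unique wall, every wall is dual to an edge, equivariantly), and the
combinatorial distance between two vertices equals the number of walls on which their
orientations differ. -/
theorem sageev_dual_cube_complex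
    {G X : Type*} [Group G] [MulAction G X]
    (𝕎 : Set (Set (Set X))) (hws : IsWallspace 𝕎)
    (hGinv : ∀ (g : G), ∀ W ∈ 𝕎, g • W ∈ 𝕎) :
    (∀ v w : DualVertex 𝕎, (dualGraph 𝕎).Adj v w → ∃! W : 𝕎, v.1 W ≠ w.1 W) ∧
    (∀ W : 𝕎, ∃ v w : DualVertex 𝕎, (dualGraph 𝕎).Adj v w ∧ v.1 W ≠ w.1 W) ∧
    (∃ act : G → DualVertex 𝕎 → DualVertex 𝕎,
      (∀ (g : G) (v : DualVertex 𝕎) (W : 𝕎),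
        (act g v).1 W = g • v.1 ⟨g⁻¹ • (W : Set (Set X)), hGinv g⁻¹ _ W.2⟩) ∧
      (∀ (g : G) (v w : DualVertex 𝕎),
        (dualGraph 𝕎).Adj v w → (dualGraph 𝕎).Adj (act g v) (act g w)) ∧
      (∀ (g : G) (v w : DualVertex 𝕎) (W : 𝕎), v.1 W ≠ w.1 W →
        (act g v).1 ⟨g • (W : Set (Set X)), hGinv g _ W.2⟩ ≠
          (act g w).1 ⟨g • (W : Set (Set X)), hGinv g _ W.2⟩)) ∧
    (∀ v w : DualVertex 𝕎,
      (dualGraph 𝕎).dist v w = {W : 𝕎 | v.1 W ≠ w.1 W}.ncard) :=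
  ⟨fun _ _ h => h, DualVertex.exists_adj_ne hws,
    ⟨DualVertex.smul hGinv, fun _ _ _ => rfl, fun _ _ _ => DualVertex.adj_smul hGinv,
      fun _ _ _ _ => DualVertex.wallPerm_mem_diffWalls_smul hGinv⟩,
    DualVertex.dist_eq_ncard_diffWalls hws⟩
end

section
/- Let Γ be a group with a left-invariant pseudometric d, and suppose η_m and η are Γ-invariant Radon measures on a space of geodesics with intersection pairing i(·,·) that is ℝ₊-bilinear. Suppose (α_m) and α are measures with i(α_m, η_{[g]}) = ℓ_m[g] and i(α, η_{[g]}) = ℓ[g] for length functions ℓ_m, ℓ on conjugacy classes, and suppose t_m α_m → α in a topology in which i is continuous at every pair (α, η). If ℓ[g] > 0 for all nontrivial g and the space of projective currents is sequentially compact with i(α, β) > 0 for all nonzero β, then sup_{g≠1} ℓ_m[g]/ℓ[g] · sup_{h≠1} ℓ[h]/ℓ_m[h] → 1 as m → ∞. -/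
open Filter Topology

lemma dp_exists_extension {X : Type*} [TopologicalSpace X] {ν : ℕ → ℕ} (hν : StrictMono ν)
    (b : ℕ → X) (c : X) (hb : Tendsto b atTop (𝓝 c)) :
    ∃ B : ℕ → X, (∀ k, B (ν k) = b k) ∧ Tendsto B atTop (𝓝 c) := by
  classical
  refine ⟨fun n => if h : ∃ k, ν k = n then b h.choose else c, ?_, ?_⟩
  · intro k
    have h : ∃ j, ν j = ν k := ⟨k, rfl⟩
    simp only [dif_pos h]
    congr 1
    exact hν.injective h.choose_spec
  · rw [tendsto_atTop_nhds] at hb ⊢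
    intro U hU hUo
    obtain ⟨K, hK⟩ := hb U hU hUo
    refine ⟨ν K, fun n hn => ?_⟩
    by_cases h : ∃ k, ν k = n
    · simp only [dif_pos h]
      apply hK
      have : ν K ≤ ν h.choose := by rw [h.choose_spec]; exact hn
      exact hν.le_iff_le.mp this
    · simp only [dif_neg h]; exact hU

lemma dp_cont_second {A Curr : Type*} [TopologicalSpace Curr] [SMul ℝ A]
    (i : A → Curr → ℝ) (αs : ℕ → A) (α : A) (t : ℕ → ℝ)
    (hcont : ∀ (c : Curr) (β : ℕ → Curr), Tendsto β atTop (𝓝 c) →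
      Tendsto (fun m => i (t m • αs m) (β m)) atTop (𝓝 (i α c)))
    (c : Curr) (β : ℕ → Curr) (hβ : Tendsto β atTop (𝓝 c)) :
    Tendsto (fun m => i α (β m)) atTop (𝓝 (i α c)) := by
  classical
  rw [Metric.tendsto_atTop]
  by_contra hcon
  push_neg at hcon
  obtain ⟨ε, hε, hfreq⟩ := hcon
  have hfreq' : ∃ᶠ m in atTop, ε ≤ dist (i α (β m)) (i α c) := by
    rw [frequently_atTop]
    intro N; obtain ⟨m, hm1, hm2⟩ := hfreq N; exact ⟨m, hm1, hm2⟩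
  obtain ⟨φ, hφ, hφ2⟩ := Filter.extraction_of_frequently_atTop hfreq'
  have hc : ∀ j : ℕ, ∃ N : ℕ, ∀ n ≥ N,
      dist (i (t n • αs n) (β (φ j))) (i α (β (φ j))) < ε / 2 := by
    intro j
    have := hcont (β (φ j)) (fun _ => β (φ j)) tendsto_const_nhds
    rw [Metric.tendsto_atTop] at this
    exact this (ε / 2) (by linarith)
  choose N hN using hc
  set ν : ℕ → ℕ := fun j => Nat.rec (N 0) (fun j ih => max (N (j + 1)) (ih + 1)) j with hνdef
  have hνmono : StrictMono ν := by
    apply strictMono_nat_of_lt_succ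
    intro j
    exact lt_of_lt_of_le (Nat.lt_succ_self _) (le_max_right _ _)
  have hνge : ∀ j, N j ≤ ν j := by
    intro j
    cases j with
    | zero => exact le_refl _
    | succ j => exact le_max_left _ _
  obtain ⟨B, hB1, hB2⟩ := dp_exists_extension hνmono (fun j => β (φ j)) c
    (hβ.comp hφ.tendsto_atTop)
  have hBct := hcont c B hB2
  have hcomp : Tendsto (fun j => i (t (ν j) • αs (ν j)) (β (φ j))) atTop (𝓝 (i α c)) := by
    apply (hBct.comp hνmono.tendsto_atTop).congr
    intro j
    simp [Function.comp, hB1 j]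
  rw [Metric.tendsto_atTop] at hcomp
  obtain ⟨J, hJ⟩ := hcomp (ε / 2) (by linarith)
  have h1 := hJ J (le_refl J)
  have h2 := hN J (ν J) (hνge J)
  have h3 := hφ2 J
  have := dist_triangle (i α (β (φ J))) (i (t (ν J) • αs (ν J)) (β (φ J))) (i α c)
  rw [dist_comm] at h2
  linarith

/-- Abstract duality principle: if currents `t m • αs m` dual to length functions `ℓm m`
converge to a filling current `α` dual to `ℓ`, the pairing `i` is `ℝ₊`-bilinear and
continuous at pairs `(α, η)`, and the projectivized space of currents is sequentially
compact, then the ratio distortion between `ℓm m` and `ℓ` tends to `1`. -/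
theorem duality_principle_ratio_distortion_tendsto_one
    {Γ A Curr : Type*} [Group Γ] [Nontrivial Γ]
    [TopologicalSpace Curr] [AddCommMonoid Curr] [SMul ℝ Curr] [SMul ℝ A]
    (i : A → Curr → ℝ)
    (hiadd : ∀ (a : A) (β γ : Curr), i a (β + γ) = i a β + i a γ)
    (hismulCurr : ∀ (a : A) (t : ℝ) (β : Curr), 0 ≤ t → i a (t • β) = t * i a β)
    (hismulA : ∀ (t : ℝ) (a : A) (β : Curr), 0 ≤ t → i (t • a) β = t * i a β)
    (η : Γ → Curr) (αs : ℕ → A) (α : A) (t : ℕ → ℝ) (ht : ∀ m, 0 < t m)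
    (ℓm : ℕ → Γ → ℝ) (ℓ : Γ → ℝ)
    (hℓm : ∀ (m : ℕ) (g : Γ), i (αs m) (η g) = ℓm m g)
    (hℓ : ∀ g : Γ, i α (η g) = ℓ g)
    (hcont : ∀ (c : Curr) (β : ℕ → Curr), Tendsto β atTop (𝓝 c) →
      Tendsto (fun m => i (t m • αs m) (β m)) atTop (𝓝 (i α c)))
    (hpos : ∀ g : Γ, g ≠ 1 → 0 < ℓ g)
    (hposm : ∀ (m : ℕ) (g : Γ), g ≠ 1 → 0 < ℓm m g)
    (hfill : ∀ β : Curr, β ≠ 0 → 0 < i α β)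
    (hηne : ∀ g : Γ, g ≠ 1 → η g ≠ 0)
    (hcompact : ∀ β : ℕ → Curr, (∀ k, β k ≠ 0) →
      ∃ (φ : ℕ → ℕ) (s : ℕ → ℝ) (βlim : Curr), StrictMono φ ∧ (∀ k, 0 < s k) ∧
        βlim ≠ 0 ∧ Tendsto (fun k => s k • β (φ k)) atTop (𝓝 βlim)) :
    Tendsto (fun m =>
      sSup {x : ℝ | ∃ g : Γ, g ≠ 1 ∧ x = ℓm m g / ℓ g} *
        sSup {x : ℝ | ∃ h : Γ, h ≠ 1 ∧ x = ℓ h / ℓm m h}) atTop (𝓝 1) := by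
  classical
  -- Key pairwise estimate
  have key : ∀ lam : ℝ, 1 < lam → ∀ᶠ m in atTop, ∀ g, g ≠ 1 → ∀ h, h ≠ 1 →
      ℓm m g * ℓ h ≤ lam * (ℓ g * ℓm m h) := by
    intro lam hlam
    by_contra hcon
    rw [Filter.not_eventually] at hcon
    have hfreq : ∃ᶠ m in atTop, ∃ g, g ≠ 1 ∧ ∃ h, h ≠ 1 ∧
        lam * (ℓ g * ℓm m h) < ℓm m g * ℓ h := by
      apply hcon.mono
      intro m hm
      push_neg at hm
      exact hm
    obtain ⟨ψ, hψ, hψ2⟩ := Filter.extraction_of_frequently_atTop hfreq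
    choose g hg h hh hlt using hψ2
    obtain ⟨φ1, s1, β, hφ1, hs1, hβne, hβ⟩ :=
      hcompact (fun k => η (g k)) (fun k => hηne _ (hg k))
    obtain ⟨φ2, s2, γ, hφ2, hs2, hγne, hγ⟩ :=
      hcompact (fun k => η (h (φ1 k))) (fun k => hηne _ (hh _))
    set σ : ℕ → ℕ := fun k => φ1 (φ2 k) with hσdef
    set ν : ℕ → ℕ := fun k => ψ (σ k) with hνdef
    have hνmono : StrictMono ν := fun a b hab => hψ (hφ1 (hφ2 hab))
    set bG : ℕ → Curr := fun k => s1 (φ2 k) • η (g (σ k)) with hbGdef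
    set bH : ℕ → Curr := fun k => s2 k • η (h (σ k)) with hbHdef
    have hbG : Tendsto bG atTop (𝓝 β) := hβ.comp hφ2.tendsto_atTop
    have hbH : Tendsto bH atTop (𝓝 γ) := hγ
    -- convergence of the four quantities
    obtain ⟨BG, hBG1, hBG2⟩ := dp_exists_extension hνmono bG β hbG
    obtain ⟨BH, hBH1, hBH2⟩ := dp_exists_extension hνmono bH γ hbH
    have hA : Tendsto (fun k => i (t (ν k) • αs (ν k)) (bG k)) atTop (𝓝 (i α β)) := by
      apply ((hcont β BG hBG2).comp hνmono.tendsto_atTop).congr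
      intro k
      simp [Function.comp, hBG1 k]
    have hC : Tendsto (fun k => i (t (ν k) • αs (ν k)) (bH k)) atTop (𝓝 (i α γ)) := by
      apply ((hcont γ BH hBH2).comp hνmono.tendsto_atTop).congr
      intro k
      simp [Function.comp, hBH1 k]
    have hE : Tendsto (fun k => i α (bG k)) atTop (𝓝 (i α β)) :=
      dp_cont_second i αs α t hcont β bG hbG
    have hF : Tendsto (fun k => i α (bH k)) atTop (𝓝 (i α γ)) :=
      dp_cont_second i αs α t hcont γ bH hbH
    have hβpos : 0 < i α β := hfill β hβne
    have hγpos : 0 < i α γ := hfill γ hγne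
    -- the ratio tendsto 1
    have hr : Tendsto
        (fun k => (i (t (ν k) • αs (ν k)) (bG k) * i α (bH k)) /
          (i α (bG k) * i (t (ν k) • αs (ν k)) (bH k))) atTop
        (𝓝 ((i α β * i α γ) / (i α β * i α γ))) :=
      (hA.mul hF).div (hE.mul hC) (ne_of_gt (mul_pos hβpos hγpos))
    have hr1 : Tendsto
        (fun k => (i (t (ν k) • αs (ν k)) (bG k) * i α (bH k)) /
          (i α (bG k) * i (t (ν k) • αs (ν k)) (bH k))) atTop (𝓝 1) := by
      rwa [div_self (ne_of_gt (mul_pos hβpos hγpos))] at hr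
    -- but the ratio is ≥ lam everywhere
    have hrk : ∀ k, lam ≤ (i (t (ν k) • αs (ν k)) (bG k) * i α (bH k)) /
        (i α (bG k) * i (t (ν k) • αs (ν k)) (bH k)) := by
      intro k
      have hAval : i (t (ν k) • αs (ν k)) (bG k)
          = t (ν k) * (s1 (φ2 k) * ℓm (ν k) (g (σ k))) := by
        rw [hbGdef]
        rw [hismulA _ _ _ (ht _).le, hismulCurr _ _ _ (hs1 _).le, hℓm]
      have hCval : i (t (ν k) • αs (ν k)) (bH k)
          = t (ν k) * (s2 k * ℓm (ν k) (h (σ k))) := by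
        rw [hbHdef]
        rw [hismulA _ _ _ (ht _).le, hismulCurr _ _ _ (hs2 _).le, hℓm]
      have hEval : i α (bG k) = s1 (φ2 k) * ℓ (g (σ k)) := by
        rw [hbGdef, hismulCurr _ _ _ (hs1 _).le, hℓ]
      have hFval : i α (bH k) = s2 k * ℓ (h (σ k)) := by
        rw [hbHdef, hismulCurr _ _ _ (hs2 _).le, hℓ]
      rw [hAval, hCval, hEval, hFval]
      have htk := ht (ν k)
      have hs1k := hs1 (φ2 k)
      have hs2k := hs2 k
      have hG := hg (σ k)
      have hH := hh (σ k)
      have hℓG := hpos _ hG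
      have hℓmH := hposm (ν k) _ hH
      have hden : 0 < (s1 (φ2 k) * ℓ (g (σ k))) * (t (ν k) * (s2 k * ℓm (ν k) (h (σ k)))) := by
        positivity
      rw [le_div_iff₀ hden]
      have hltk := (hlt (σ k)).le
      calc lam * ((s1 (φ2 k) * ℓ (g (σ k))) * (t (ν k) * (s2 k * ℓm (ν k) (h (σ k)))))
          = (t (ν k) * s1 (φ2 k) * s2 k) * (lam * (ℓ (g (σ k)) * ℓm (ν k) (h (σ k)))) := by
            ring
        _ ≤ (t (ν k) * s1 (φ2 k) * s2 k) * (ℓm (ν k) (g (σ k)) * ℓ (h (σ k))) := by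
            apply mul_le_mul_of_nonneg_left hltk
            positivity
        _ = (t (ν k) * (s1 (φ2 k) * ℓm (ν k) (g (σ k)))) * (s2 k * ℓ (h (σ k))) := by
            ring
    have : lam ≤ 1 := ge_of_tendsto' hr1 hrk
    linarith
  -- From the pairwise estimate, bound the product of suprema
  obtain ⟨g0, hg0⟩ := exists_ne (1 : Γ)
  have main : ∀ lam : ℝ, 1 < lam → ∀ᶠ m in atTop,
      1 ≤ sSup {x : ℝ | ∃ g : Γ, g ≠ 1 ∧ x = ℓm m g / ℓ g} *
        sSup {x : ℝ | ∃ h : Γ, h ≠ 1 ∧ x = ℓ h / ℓm m h} ∧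
      sSup {x : ℝ | ∃ g : Γ, g ≠ 1 ∧ x = ℓm m g / ℓ g} *
        sSup {x : ℝ | ∃ h : Γ, h ≠ 1 ∧ x = ℓ h / ℓm m h} ≤ lam := by
    intro lam hlam
    filter_upwards [key lam hlam] with m hm
    set S := {x : ℝ | ∃ g : Γ, g ≠ 1 ∧ x = ℓm m g / ℓ g} with hSdef
    set T := {x : ℝ | ∃ h : Γ, h ≠ 1 ∧ x = ℓ h / ℓm m h} with hTdef
    have hSne : S.Nonempty := ⟨ℓm m g0 / ℓ g0, g0, hg0, rfl⟩
    have hTne : T.Nonempty := ⟨ℓ g0 / ℓm m g0, g0, hg0, rfl⟩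
    have hSbdd : BddAbove S := by
      refine ⟨(lam * ℓm m g0) / ℓ g0, ?_⟩
      rintro x ⟨g, hgne, rfl⟩
      rw [div_le_div_iff₀ (hpos g hgne) (hpos g0 hg0)]
      nlinarith [hm g hgne g0 hg0]
    have hTbdd : BddAbove T := by
      refine ⟨(lam * ℓ g0) / ℓm m g0, ?_⟩
      rintro x ⟨h, hhne, rfl⟩
      rw [div_le_div_iff₀ (hposm m h hhne) (hposm m g0 hg0)]
      nlinarith [hm g0 hg0 h hhne]
    have hx0 : ℓm m g0 / ℓ g0 ≤ sSup S := le_csSup hSbdd ⟨g0, hg0, rfl⟩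
    have hy0 : ℓ g0 / ℓm m g0 ≤ sSup T := le_csSup hTbdd ⟨g0, hg0, rfl⟩
    have hx0pos : 0 < ℓm m g0 / ℓ g0 := div_pos (hposm m g0 hg0) (hpos g0 hg0)
    have hy0pos : 0 < ℓ g0 / ℓm m g0 := div_pos (hpos g0 hg0) (hposm m g0 hg0)
    have hSpos : 0 < sSup S := lt_of_lt_of_le hx0pos hx0
    have hTpos : 0 < sSup T := lt_of_lt_of_le hy0pos hy0
    constructor
    · have h1 : (ℓm m g0 / ℓ g0) * (ℓ g0 / ℓm m g0) = 1 := by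
        rw [div_mul_div_comm, div_eq_one_iff_eq
          (ne_of_gt (mul_pos (hpos g0 hg0) (hposm m g0 hg0)))]
        ring
      calc (1 : ℝ) = (ℓm m g0 / ℓ g0) * (ℓ g0 / ℓm m g0) := h1.symm
        _ ≤ sSup S * sSup T :=
          mul_le_mul hx0 hy0 hy0pos.le (le_trans hx0pos.le hx0)
    · -- sSup S * sSup T ≤ lam
      have hST : ∀ x ∈ S, ∀ y ∈ T, x * y ≤ lam := by
        rintro x ⟨g, hgne, rfl⟩ y ⟨h, hhne, rfl⟩
        rw [div_mul_div_comm, div_le_iff₀ (mul_pos (hpos g hgne) (hposm m h hhne))]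
        exact hm g hgne h hhne
      have hTy : ∀ y ∈ T, 0 < y := by
        rintro y ⟨h, hhne, rfl⟩
        exact div_pos (hpos h hhne) (hposm m h hhne)
      have h1 : ∀ y ∈ T, sSup S * y ≤ lam := by
        intro y hy
        have hyp := hTy y hy
        have : sSup S ≤ lam / y :=
          csSup_le hSne (fun x hx => (le_div_iff₀ hyp).mpr (hST x hx y hy))
        calc sSup S * y ≤ (lam / y) * y := mul_le_mul_of_nonneg_right this hyp.le
          _ = lam := by field_simp
      have h2 : sSup T ≤ lam / sSup S := by
        apply csSup_le hTne
        intro y hy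
        rw [le_div_iff₀ hSpos]
        rw [mul_comm]
        exact h1 y hy
      calc sSup S * sSup T ≤ sSup S * (lam / sSup S) :=
            mul_le_mul_of_nonneg_left h2 hSpos.le
        _ = lam := by field_simp
  -- conclude
  rw [tendsto_order]
  constructor
  · intro a ha
    filter_upwards [main 2 one_lt_two] with m hm
    exact lt_of_lt_of_le ha hm.1
  · intro a ha
    have h2 : (1 : ℝ) < (1 + a) / 2 := by linarith
    filter_upwards [main ((1 + a) / 2) h2] with m hm
    calc _ ≤ (1 + a) / 2 := hm.2
      _ < a := by linarith
end
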